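/- Let W : ℝ^{3×3} → [0,∞] be frame indifferent, i.e. W(RF) = W(F) for all F ∈ ℝ^{3×3} and R ∈ SO(3), and admit a quadratic expansion at the identity with quadratic form Q: lim_{G→0}(W(I+G) − Q(G))/|G|² = 0. Then Q(G) = Q(sym G) for every G ∈ ℝ^{3×3}, i.e. Q vanishes on skew-symmetric matrices and depends only on the symmetric part of its argument. -/

import Mathlib

open Matrix Filter Topology

noncomputable section

def frob3 (M : Matrix (Fin 3) (Fin 3) ℝ) : ℝ := Real.sqrt (∑ i, ∑ j, (M i j) ^ 2)

def SO3 : Set (Matrix (Fin 3) (Fin 3) ℝ) := {R | Rᵀ * R = 1 ∧ R.det = 1}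

def sym3 (G : Matrix (Fin 3) (Fin 3) ℝ) : Matrix (Fin 3) (Fin 3) ℝ := (1 / 2 : ℝ) • (G + Gᵀ)

/-!
Split `G = A + S` with `S = sym G` and `A = G - S` skew. The rotated path
`t ↦ exp (t A) (I + t S)` leaves `I` with velocity `G`, so the quadratic expansion gives
`W (exp (t A) (I + t S)) / t² → Q G`. By frame indifference this is `W (I + t S) / t²`, whose limit
is `Q S` by the same expansion (for `S = 0` the limit of the constant `W I / t²` can only be `0`).
-/

open NormedSpace

local notation "𝕄" => Matrix (Fin 3) (Fin 3) ℝ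

section Homogeneous

variable {E : Type*} [TopologicalSpace E] [AddCommGroup E] [Module ℝ E]

lemma tendsto_zero_of_tendsto_inv_smul [ContinuousSMul ℝ E] {u : ℝ → E} {M : E}
    (hu : Tendsto (fun t => t⁻¹ • u t) (𝓝[≠] 0) (𝓝 M)) : Tendsto u (𝓝[≠] 0) (𝓝 0) := by
  have h : Tendsto (fun t : ℝ => t • (t⁻¹ • u t)) (𝓝[≠] 0) (𝓝 ((0 : ℝ) • M)) :=
    (tendsto_id.mono_left nhdsWithin_le_nhds).smul hu
  rw [zero_smul] at h
  refine h.congr' ?_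
  filter_upwards [self_mem_nhdsWithin] with t ht
  rw [smul_smul, mul_inv_cancel₀ ht, one_smul]

lemma tendsto_nhdsNE_of_tendsto_inv_smul [ContinuousSMul ℝ E] [T2Space E] {u : ℝ → E} {M : E}
    (hM : M ≠ 0)
    (hu : Tendsto (fun t => t⁻¹ • u t) (𝓝[≠] 0) (𝓝 M)) : Tendsto u (𝓝[≠] 0) (𝓝[≠] 0) := by
  refine tendsto_nhdsWithin_iff.mpr ⟨tendsto_zero_of_tendsto_inv_smul hu, ?_⟩
  filter_upwards [hu.eventually (eventually_ne_nhds hM)] with t ht hu0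
  exact ht (by rw [hu0, smul_zero])

lemma tendsto_div_sq_of_tendsto_inv_smul {f : E → ℝ} (hf : Continuous f)
    (hsmul : ∀ (c : ℝ) x, f (c • x) = c ^ 2 * f x) {u : ℝ → E} {M : E}
    (hu : Tendsto (fun t => t⁻¹ • u t) (𝓝[≠] 0) (𝓝 M)) :
    Tendsto (fun t => f (u t) / t ^ 2) (𝓝[≠] 0) (𝓝 (f M)) :=
  ((hf.tendsto M).comp hu).congr fun t => by
    rw [Function.comp_apply, hsmul, inv_pow, inv_mul_eq_div]

end Homogeneous

lemma eq_zero_of_tendsto_const_div_sq {c q : ℝ}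
    (h : Tendsto (fun t : ℝ => c / t ^ 2) (𝓝[≠] 0) (𝓝 q)) : q = 0 := by
  have hsq : Tendsto (fun t : ℝ => t ^ 2) (𝓝[≠] 0) (𝓝 0) := by
    simpa using ((continuous_pow 2).tendsto (0 : ℝ)).mono_left (nhdsWithin_le_nhds (s := {0}ᶜ))
  have hc : Tendsto (fun _ : ℝ => c) (𝓝[≠] 0) (𝓝 (q * 0)) := by
    refine (h.mul hsq).congr' ?_
    filter_upwards [self_mem_nhdsWithin] with t ht
    exact div_mul_cancel₀ c (pow_ne_zero 2 ht)
  have hc0 : c = 0 := by rw [tendsto_const_nhds_iff.mp hc, mul_zero]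
  have hq : Tendsto (fun _ : ℝ => (0 : ℝ)) (𝓝[≠] 0) (𝓝 q) := by simpa [hc0] using h
  exact (tendsto_const_nhds_iff.mp hq).symm

lemma frob3_eq_zero {M : 𝕄} (h : frob3 M = 0) : M = 0 := by
  have hsq : ∀ i j, M i j ^ 2 = 0 := by
    have hnn : ∀ i, 0 ≤ ∑ j, M i j ^ 2 := fun i => Finset.sum_nonneg fun j _ => sq_nonneg _
    rw [frob3, Real.sqrt_eq_zero (Finset.sum_nonneg fun i _ => hnn i),
      Finset.sum_eq_zero_iff_of_nonneg fun i _ => hnn i] at h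
    exact fun i j => (Finset.sum_eq_zero_iff_of_nonneg fun j _ => sq_nonneg _).mp
      (h i (Finset.mem_univ i)) j (Finset.mem_univ j)
  ext i j
  exact pow_eq_zero_iff two_ne_zero |>.mp (hsq i j)

lemma frob3_smul (c : ℝ) (M : 𝕄) : frob3 (c • M) = |c| * frob3 M := by
  simp only [frob3, Matrix.smul_apply, smul_eq_mul, mul_pow, ← Finset.mul_sum]
  rw [Real.sqrt_mul (sq_nonneg c), Real.sqrt_sq_eq_abs]

lemma continuous_frob3 : Continuous frob3 :=
  Real.continuous_sqrt.comp <| continuous_finsetSum _ fun i _ =>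
    continuous_finsetSum _ fun j _ => (continuous_apply_apply i j).pow 2

lemma continuous_bilin_apply_self {E : Type*} [AddCommGroup E] [Module ℝ E] [TopologicalSpace E]
    [IsTopologicalAddGroup E] [ContinuousSMul ℝ E] [FiniteDimensional ℝ E] [T2Space E]
    (L : E →ₗ[ℝ] E →ₗ[ℝ] ℝ) : Continuous fun x => L x x := by
  let b := Module.finBasis ℝ E
  have hexpand : (fun x => L x x) = fun x => ∑ k, b.coord k x * L (b k) x := by
    funext x
    nth_rewrite 1 [← b.sum_repr x]
    rw [map_sum, LinearMap.sum_apply]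
    simp only [map_smul, LinearMap.smul_apply, smul_eq_mul, Module.Basis.coord_apply]
  rw [hexpand]
  exact continuous_finsetSum _ fun k _ =>
    (b.coord k).continuous_of_finiteDimensional.mul (L (b k)).continuous_of_finiteDimensional

lemma exp_smul_mem_SO3 {A : 𝕄} (hA : Aᵀ = -A) (t : ℝ) :
    exp (t • A) ∈ SO3 := by
  have horth : ∀ s : ℝ, (exp (s • A))ᵀ * exp (s • A) = 1 := fun s => by
    rw [← Matrix.exp_transpose, transpose_smul, hA, smul_neg,
      ← Matrix.exp_add_of_commute _ _ ((Commute.refl (s • A)).neg_left), neg_add_cancel, exp_zero]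
  refine ⟨horth t, ?_⟩
  have hsq : (exp (t • A)).det * (exp (t • A)).det = 1 := by
    simpa only [det_mul, det_transpose, det_one] using congrArg det (horth t)
  have hnn : 0 ≤ (exp (t • A)).det := by
    rw [show t • A = (t / 2) • A + (t / 2) • A by rw [← add_smul, add_halves],
      Matrix.exp_add_of_commute _ _ (Commute.refl _), det_mul]
    exact mul_self_nonneg _
  nlinarith

lemma tendsto_inv_smul_exp_smul_mul_sub_one (A S : 𝕄) :
    Tendsto (fun t : ℝ => t⁻¹ • (exp (t • A) * (1 + t • S) - 1)) (𝓝[≠] 0) (𝓝 (A + S)) := by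
  let _ : NormedRing (𝕄) := Matrix.linftyOpNormedRing
  let _ : NormedAlgebra ℝ (𝕄) := Matrix.linftyOpNormedAlgebra
  have hexpA : HasDerivAt (fun t : ℝ => exp (t • A)) A 0 := by
    have h := hasDerivAt_exp_smul_const (𝕂 := ℝ) A 0
    rw [zero_smul, exp_zero, one_mul] at h
    exact h
  have hlin : HasDerivAt (fun t : ℝ => 1 + t • S) S 0 := by
    have h := ((hasDerivAt_id (0 : ℝ)).smul_const S).const_add (1 : 𝕄)
    rwa [one_smul] at h
  have hprod := (hexpA.mul hlin).sub_const 1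
  simp only [zero_smul, add_zero, mul_one, exp_zero, one_mul] at hprod
  exact (hasDerivAt_iff_tendsto_slope.mp hprod).congr fun t => by simp [slope]

lemma transpose_sub_sym3 (G : 𝕄) : (G - sym3 G)ᵀ = -(G - sym3 G) := by
  ext i j
  simp [sym3]
  ring

lemma tendsto_W_one_add_div_sq {W Q : 𝕄 → ℝ} {L : 𝕄 →ₗ[ℝ] 𝕄 →ₗ[ℝ] ℝ} (hQL : ∀ G, Q G = L G G)
    (hexp : Tendsto (fun G => (W (1 + G) - Q G) / (frob3 G) ^ 2) (𝓝[≠] (0 : 𝕄)) (𝓝 0))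
    {u : ℝ → 𝕄} {M : 𝕄} (hM : M ≠ 0)
    (hu : Tendsto (fun t => t⁻¹ • u t) (𝓝[≠] 0) (𝓝 M)) :
    Tendsto (fun t => W (1 + u t) / t ^ 2) (𝓝[≠] 0) (𝓝 (Q M)) := by
  have hQ : Tendsto (fun t => Q (u t) / t ^ 2) (𝓝[≠] 0) (𝓝 (Q M)) := by
    refine tendsto_div_sq_of_tendsto_inv_smul ?_ (fun c x => ?_) hu
    · rw [funext hQL]
      exact continuous_bilin_apply_self L
    · simp only [hQL, map_smul, LinearMap.smul_apply, smul_eq_mul]; ring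
  have hfrob : Tendsto (fun t => frob3 (u t) ^ 2 / t ^ 2) (𝓝[≠] 0) (𝓝 (frob3 M ^ 2)) :=
    tendsto_div_sq_of_tendsto_inv_smul (f := fun x => frob3 x ^ 2) (continuous_frob3.pow 2)
      (fun c x => by rw [frob3_smul, mul_pow, sq_abs]) hu
  have hrem : Tendsto (fun t => (W (1 + u t) - Q (u t)) / t ^ 2) (𝓝[≠] 0) (𝓝 0) := by
    have h := (hexp.comp (tendsto_nhdsNE_of_tendsto_inv_smul hM hu)).mul hfrob
    rw [zero_mul] at h
    refine h.congr' ?_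
    filter_upwards [tendsto_nhdsNE_of_tendsto_inv_smul hM hu self_mem_nhdsWithin] with t ht
    have hf : frob3 (u t) ^ 2 ≠ 0 := pow_ne_zero _ fun h0 => ht (frob3_eq_zero h0)
    exact div_mul_div_cancel₀ hf
  have hsum := hrem.add hQ
  rw [zero_add] at hsum
  exact hsum.congr fun t => by rw [← add_div, sub_add_cancel]

theorem stmt2_general (W : Matrix (Fin 3) (Fin 3) ℝ → ℝ)
    (hFI : ∀ (F R : Matrix (Fin 3) (Fin 3) ℝ), R ∈ SO3 → W (R * F) = W F)
    (Q : Matrix (Fin 3) (Fin 3) ℝ → ℝ)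
    (L : Matrix (Fin 3) (Fin 3) ℝ →ₗ[ℝ] Matrix (Fin 3) (Fin 3) ℝ →ₗ[ℝ] ℝ)
    (hQL : ∀ G, Q G = L G G)
    (hexp : Tendsto (fun G => (W (1 + G) - Q G) / (frob3 G) ^ 2)
      (𝓝[≠] (0 : Matrix (Fin 3) (Fin 3) ℝ)) (𝓝 0)) :
    ∀ G : Matrix (Fin 3) (Fin 3) ℝ, Q G = Q (sym3 G) := by
  intro G
  by_cases hG : G = 0
  · simp [hG, sym3]
  set S := sym3 G
  have hvel : Tendsto (fun t : ℝ => t⁻¹ • (exp (t • (G - S)) * (1 + t • S) - 1)) (𝓝[≠] 0)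
      (𝓝 G) := by
    simpa using tendsto_inv_smul_exp_smul_mul_sub_one (G - S) S
  have hrot : Tendsto (fun t => W (1 + t • S) / t ^ 2) (𝓝[≠] 0) (𝓝 (Q G)) := by
    refine (tendsto_W_one_add_div_sq hQL hexp hG hvel).congr fun t => ?_
    rw [add_sub_cancel, hFI _ _ (exp_smul_mem_SO3 (transpose_sub_sym3 G) t)]
  by_cases hS : S = 0
  · rw [hS, hQL 0, map_zero]
    exact eq_zero_of_tendsto_const_div_sq (by simpa [hS] using hrot)
  · refine tendsto_nhds_unique hrot (tendsto_W_one_add_div_sq hQL hexp hS ?_)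
    refine tendsto_const_nhds.congr' ?_
    filter_upwards [self_mem_nhdsWithin] with t ht
    rw [smul_smul, inv_mul_cancel₀ ht, one_smul]

/-- If W is frame indifferent (W(RF) = W(F) for all R ∈ SO(3)) and admits the quadratic
expansion `W(I+G) = Q(G) + o(|G|²)` at the identity with Q a quadratic form, then
`Q(G) = Q(sym G)` for every G. -/
theorem stmt2 (W : Matrix (Fin 3) (Fin 3) ℝ → ℝ) (hW0 : ∀ F, 0 ≤ W F)
    (hFI : ∀ (F R : Matrix (Fin 3) (Fin 3) ℝ), R ∈ SO3 → W (R * F) = W F)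
    (Q : Matrix (Fin 3) (Fin 3) ℝ → ℝ)
    (L : Matrix (Fin 3) (Fin 3) ℝ →ₗ[ℝ] Matrix (Fin 3) (Fin 3) ℝ →ₗ[ℝ] ℝ)
    (hLsymm : ∀ A B, L A B = L B A) (hQL : ∀ G, Q G = L G G)
    (hexp : Tendsto (fun G => (W (1 + G) - Q G) / (frob3 G) ^ 2)
      (𝓝[≠] (0 : Matrix (Fin 3) (Fin 3) ℝ)) (𝓝 0)) :
    ∀ G : Matrix (Fin 3) (Fin 3) ℝ, Q G = Q (sym3 G) :=
  stmt2_general W hFI Q L hQL hexp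

end
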